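/- Let Ω be a finite set, Z a random element of Ω, and 𝔲₁, 𝔲₂ : Ω → ℕ with 𝔲₁ ≤ v₁ and 𝔲₂ ≤ v₂ everywhere; set U := 𝔲₁(Z) + 𝔲₂(Z), let P_{(l,k)} denote the law of Z given 𝔲₁(Z) = l, 𝔲₂(Z) = k, let P_{(u)} denote the law of Z given U = u, and write p(l|u) := P(𝔲₁(Z) = l | U = u). Let 𝓡₁, 𝓡₂ be Markov kernels on Ω such that whenever Z ∼ P_{(l,k)} with l + k = u < v₁ + v₂: if l < v₁ then 𝓡₁(Z) ∼ P_{(l+1,k)}, and if k < v₂ then 𝓡₂(Z) ∼ P_{(l,k+1)}. Let r₁, r₂ be functions of (l, k) with r₁(l,k) + r₂(l,k) = 1, r₁(v₁,k) = 0, r₂(l,v₂) = 0, satisfying for all u = 0, …, v₁+v₂−1: r₁(l−1, u−l+1) p(l−1|u) + r₂(l, u−l) p(l|u) = p(l|u+1) for (u−v₂)∨0 < l ≤ u∧v₁; r₂(0, u) p(0|u) = p(0|u+1) when u < v₂; and r₁(u, 0) p(u|u) = p(u+1|u+1) when u < v₁. Define the combined kernel 𝓡 that, at z, applies 𝓡₁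 with probability r₁(𝔲₁(z), 𝔲₂(z)) and 𝓡₂ with probability r₂(𝔲₁(z), 𝔲₂(z)). Then for every u < v₁ + v₂ with P(U = u) > 0: if Z ∼ P_{(u)} then 𝓡(Z) ∼ P_{(u+1)}. -/

import Mathlib

/-! Given `U = u`, `Z` is the mixture `∑ₘ p(m|u) P_{(m,u-m)}`. On the component `P_{(m,u-m)}`
the combined kernel is the fixed mixture `r₁ 𝓡₁ + r₂ 𝓡₂` with `rᵢ = rᵢ(m, u-m)`, so it carries
that component to `r₁ P_{(m+1,u-m)} + r₂ P_{(m,u-m+1)}` (a move off the boundary has weight `0`).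
Collecting terms, `P_{(j,u+1-j)}` receives the weight `r₁(j-1, u-j+1) p(j-1|u) + r₂(j, u-j) p(j|u)`,
which the recursions identify with `p(j|u+1)`. -/


open Finset

noncomputable section

open Classical in
/-- Probability of an event under a pmf on a finite type. -/
def prOf {Ω : Type*} [Fintype Ω] (P : Ω → ℝ) (E : Ω → Prop) : ℝ :=
  ∑ z, if E z then P z else 0

open Classical in
/-- The conditional law `P_{(l,k)}` of `Z` given `𝔲₁(Z) = l` and `𝔲₂(Z) = k`. -/
def condLK {Ω : Type*} [Fintype Ω] (P : Ω → ℝ) (𝔲₁ 𝔲₂ : Ω → ℕ) (l k : ℕ) (z : Ω) : ℝ :=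
  (if 𝔲₁ z = l ∧ 𝔲₂ z = k then P z else 0) /
    prOf P (fun w => 𝔲₁ w = l ∧ 𝔲₂ w = k)

open Classical in
/-- The conditional law `P_{(u)}` of `Z` given `𝔲₁(Z) + 𝔲₂(Z) = u`. -/
def condU {Ω : Type*} [Fintype Ω] (P : Ω → ℝ) (𝔲₁ 𝔲₂ : Ω → ℕ) (u : ℕ) (z : Ω) : ℝ :=
  (if 𝔲₁ z + 𝔲₂ z = u then P z else 0) / prOf P (fun w => 𝔲₁ w + 𝔲₂ w = u)

open Classical in
/-- `p(l|u) = P(𝔲₁(Z) = l | 𝔲₁(Z) + 𝔲₂(Z) = u)`. -/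
def pLU {Ω : Type*} [Fintype Ω] (P : Ω → ℝ) (𝔲₁ 𝔲₂ : Ω → ℕ) (l u : ℕ) : ℝ :=
  prOf P (fun w => 𝔲₁ w = l ∧ 𝔲₁ w + 𝔲₂ w = u) / prOf P (fun w => 𝔲₁ w + 𝔲₂ w = u)

section

variable {Ω : Type*} [Fintype Ω] {P : Ω → ℝ} {𝔲₁ 𝔲₂ : Ω → ℕ}

lemma prOf_eq_zero_of_forall_not {E : Ω → Prop} (h : ∀ w, ¬ E w) : prOf P E = 0 :=
  sum_eq_zero fun z _ => if_neg (h z)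

lemma exists_of_prOf_ne_zero {E : Ω → Prop} (h : prOf P E ≠ 0) : ∃ w, E w := by
  by_contra! hE
  exact h (prOf_eq_zero_of_forall_not hE)

lemma prOf_nonneg (hP : ∀ z, 0 ≤ P z) (E : Ω → Prop) : 0 ≤ prOf P E :=
  sum_nonneg fun z _ => by split <;> simp [hP z]

lemma eq_zero_of_prOf_eq_zero (hP : ∀ z, 0 ≤ P z) {E : Ω → Prop} (h : prOf P E = 0)
    {z : Ω} (hz : E z) : P z = 0 := by
  have hterms := (sum_eq_zero_iff_of_nonneg fun w _ => by split <;> simp [hP w]).mp h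
  simpa [hz] using hterms z (mem_univ z)

lemma prOf_congr {E E' : Ω → Prop} (h : ∀ w, E w ↔ E' w) : prOf P E = prOf P E' :=
  congrArg (prOf P) (funext fun w => propext (h w))

lemma condLK_of_not {l k : ℕ} {z : Ω} (h : ¬ (𝔲₁ z = l ∧ 𝔲₂ z = k)) :
    condLK P 𝔲₁ 𝔲₂ l k z = 0 := by
  rw [condLK, if_neg h, zero_div]

lemma condU_of_ne {u : ℕ} {z : Ω} (h : 𝔲₁ z + 𝔲₂ z ≠ u) : condU P 𝔲₁ 𝔲₂ u z = 0 := by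
  rw [condU, if_neg h, zero_div]

lemma condLK_mul_levels (l k : ℕ) (z : Ω) (f : ℕ → ℕ → ℝ) :
    condLK P 𝔲₁ 𝔲₂ l k z * f (𝔲₁ z) (𝔲₂ z) = condLK P 𝔲₁ 𝔲₂ l k z * f l k := by
  by_cases h : 𝔲₁ z = l ∧ 𝔲₂ z = k
  · rw [h.1, h.2]
  · rw [condLK_of_not h, zero_mul, zero_mul]

lemma pLU_eq_div {l u : ℕ} (h : l ≤ u) :
    pLU P 𝔲₁ 𝔲₂ l u =
      prOf P (fun w => 𝔲₁ w = l ∧ 𝔲₂ w = u - l) / prOf P (fun w => 𝔲₁ w + 𝔲₂ w = u) := by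
  rw [pLU, prOf_congr fun w => show 𝔲₁ w = l ∧ 𝔲₁ w + 𝔲₂ w = u ↔ 𝔲₁ w = l ∧ 𝔲₂ w = u - l by
    omega]

lemma pLU_mul_condLK_self (hP : ∀ z, 0 ≤ P z) (z : Ω) :
    pLU P 𝔲₁ 𝔲₂ (𝔲₁ z) (𝔲₁ z + 𝔲₂ z) * condLK P 𝔲₁ 𝔲₂ (𝔲₁ z) (𝔲₂ z) z
      = condU P 𝔲₁ 𝔲₂ (𝔲₁ z + 𝔲₂ z) z := by
  rw [pLU_eq_div le_self_add, Nat.add_sub_cancel_left, condLK, condU, if_pos ⟨rfl, rfl⟩,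
    if_pos rfl]
  by_cases hlk : prOf P (fun w => 𝔲₁ w = 𝔲₁ z ∧ 𝔲₂ w = 𝔲₂ z) = 0
  · simp [eq_zero_of_prOf_eq_zero hP hlk ⟨rfl, rfl⟩]
  · field_simp

lemma condU_eq_sum (hP : ∀ z, 0 ≤ P z) (u : ℕ) (z : Ω) :
    condU P 𝔲₁ 𝔲₂ u z
      = ∑ m ∈ range (u + 1), pLU P 𝔲₁ 𝔲₂ m u * condLK P 𝔲₁ 𝔲₂ m (u - m) z := by
  by_cases hz : 𝔲₁ z + 𝔲₂ z = u
  · subst hz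
    rw [sum_eq_single (𝔲₁ z), Nat.add_sub_cancel_left, pLU_mul_condLK_self hP]
    · intro m _ hm
      rw [condLK_of_not fun h => hm h.1.symm, mul_zero]
    · intro hm
      exact absurd (mem_range.mpr (by omega)) hm
  · rw [condU_of_ne hz]
    refine (sum_eq_zero fun m hm => ?_).symm
    have := mem_range.mp hm
    rw [condLK_of_not (by omega), mul_zero]

variable {v₁ v₂ : ℕ}

lemma pLU_eq_zero_of_forall_not {l u : ℕ} (h : ∀ w, ¬ (𝔲₁ w = l ∧ 𝔲₁ w + 𝔲₂ w = u)) :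
    pLU P 𝔲₁ 𝔲₂ l u = 0 := by
  rw [pLU, prOf_eq_zero_of_forall_not h, zero_div]

lemma pLU_eq_zero_of_lt (h𝔲₁ : ∀ z, 𝔲₁ z ≤ v₁) {l : ℕ} (h : v₁ < l) (u : ℕ) :
    pLU P 𝔲₁ 𝔲₂ l u = 0 :=
  pLU_eq_zero_of_forall_not fun w hw => by have := h𝔲₁ w; omega

lemma pLU_eq_zero_of_add_lt (h𝔲₂ : ∀ z, 𝔲₂ z ≤ v₂) {l u : ℕ} (h : l + v₂ < u) :
    pLU P 𝔲₁ 𝔲₂ l u = 0 :=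
  pLU_eq_zero_of_forall_not fun w hw => by have := h𝔲₂ w; omega

lemma mul_pLU_eq_zero_of_le (h𝔲₁ : ∀ z, 𝔲₁ z ≤ v₁) {r : ℕ → ℕ → ℝ} (hr : ∀ k, r v₁ k = 0)
    {l : ℕ} (h : v₁ ≤ l) (k u : ℕ) : r l k * pLU P 𝔲₁ 𝔲₂ l u = 0 := by
  rcases h.eq_or_lt with rfl | h
  · rw [hr, zero_mul]
  · rw [pLU_eq_zero_of_lt h𝔲₁ h, mul_zero]

lemma mul_pLU_eq_zero_of_add_le (h𝔲₂ : ∀ z, 𝔲₂ z ≤ v₂) {r : ℕ → ℕ → ℝ}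
    (hr : ∀ l, r l v₂ = 0) {l u : ℕ} (h : l + v₂ ≤ u) : r l (u - l) * pLU P 𝔲₁ 𝔲₂ l u = 0 := by
  rcases h.eq_or_lt with rfl | h
  · rw [Nat.add_sub_cancel_left, hr, zero_mul]
  · rw [pLU_eq_zero_of_add_lt h𝔲₂ h, mul_zero]

variable {r₁ r₂ : ℕ → ℕ → ℝ}

lemma pLU_zero_succ (h𝔲₂ : ∀ z, 𝔲₂ z ≤ v₂) (hr₂v : ∀ l, r₂ l v₂ = 0) {u : ℕ}
    (hlow : u < v₂ → r₂ 0 u * pLU P 𝔲₁ 𝔲₂ 0 u = pLU P 𝔲₁ 𝔲₂ 0 (u + 1)) :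
    pLU P 𝔲₁ 𝔲₂ 0 (u + 1) = r₂ 0 u * pLU P 𝔲₁ 𝔲₂ 0 u := by
  rcases lt_or_ge u v₂ with h | h
  · exact (hlow h).symm
  · rw [pLU_eq_zero_of_add_lt h𝔲₂ (by omega),
      ← mul_pLU_eq_zero_of_add_le h𝔲₂ hr₂v (by omega : 0 + v₂ ≤ u), Nat.sub_zero]

lemma pLU_succ_succ (h𝔲₁ : ∀ z, 𝔲₁ z ≤ v₁) (hr₁v : ∀ k, r₁ v₁ k = 0) {u : ℕ}
    (hhigh : u < v₁ → r₁ u 0 * pLU P 𝔲₁ 𝔲₂ u u = pLU P 𝔲₁ 𝔲₂ (u + 1) (u + 1)) :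
    pLU P 𝔲₁ 𝔲₂ (u + 1) (u + 1) = r₁ u 0 * pLU P 𝔲₁ 𝔲₂ u u := by
  rcases lt_or_ge u v₁ with h | h
  · exact (hhigh h).symm
  · rw [pLU_eq_zero_of_lt h𝔲₁ (by omega), mul_pLU_eq_zero_of_le h𝔲₁ hr₁v h]

/-- Outside the window `(u - v₂) ∨ 0 < j ≤ u ∧ v₁` of the recursion both sides vanish. -/
lemma pLU_succ_of_pos_of_le (h𝔲₁ : ∀ z, 𝔲₁ z ≤ v₁) (h𝔲₂ : ∀ z, 𝔲₂ z ≤ v₂)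
    (hr₁v : ∀ k, r₁ v₁ k = 0) (hr₂v : ∀ l, r₂ l v₂ = 0) {u : ℕ}
    (hmid : ∀ l : ℕ, u - v₂ < l → l ≤ min u v₁ →
      r₁ (l - 1) (u - l + 1) * pLU P 𝔲₁ 𝔲₂ (l - 1) u + r₂ l (u - l) * pLU P 𝔲₁ 𝔲₂ l u
        = pLU P 𝔲₁ 𝔲₂ l (u + 1))
    {j : ℕ} (hj₀ : 0 < j) (hju : j ≤ u) :
    pLU P 𝔲₁ 𝔲₂ j (u + 1)
      = r₁ (j - 1) (u - (j - 1)) * pLU P 𝔲₁ 𝔲₂ (j - 1) u + r₂ j (u - j) * pLU P 𝔲₁ 𝔲₂ j u := by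
  by_cases hv₁ : v₁ < j
  · rw [pLU_eq_zero_of_lt h𝔲₁ hv₁, pLU_eq_zero_of_lt h𝔲₁ hv₁,
      mul_pLU_eq_zero_of_le h𝔲₁ hr₁v (by omega), mul_zero, add_zero]
  by_cases hv₂ : j + v₂ ≤ u
  · rw [pLU_eq_zero_of_add_lt h𝔲₂ (by omega),
      pLU_eq_zero_of_add_lt h𝔲₂ (by omega : j - 1 + v₂ < u),
      mul_pLU_eq_zero_of_add_le h𝔲₂ hr₂v hv₂, mul_zero, add_zero]
  rw [show u - (j - 1) = u - j + 1 by omega]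
  exact (hmid j (by omega) (by omega)).symm

variable {R₁ R₂ : Ω → Ω → ℝ}

variable (𝔲₁ 𝔲₂ r₁ r₂ R₁ R₂) in
def combinedKernel (z z' : Ω) : ℝ :=
  r₁ (𝔲₁ z) (𝔲₂ z) * R₁ z z' + r₂ (𝔲₁ z) (𝔲₂ z) * R₂ z z'

lemma sum_condLK_mul_combinedKernel (h𝔲₁ : ∀ z, 𝔲₁ z ≤ v₁) (h𝔲₂ : ∀ z, 𝔲₂ z ≤ v₂)
    (hker₁ : ∀ l k : ℕ, l + k < v₁ + v₂ → l < v₁ →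
      0 < prOf P (fun w => 𝔲₁ w = l ∧ 𝔲₂ w = k) →
      ∀ z', (∑ z, condLK P 𝔲₁ 𝔲₂ l k z * R₁ z z') = condLK P 𝔲₁ 𝔲₂ (l + 1) k z')
    (hker₂ : ∀ l k : ℕ, l + k < v₁ + v₂ → k < v₂ →
      0 < prOf P (fun w => 𝔲₁ w = l ∧ 𝔲₂ w = k) →
      ∀ z', (∑ z, condLK P 𝔲₁ 𝔲₂ l k z * R₂ z z') = condLK P 𝔲₁ 𝔲₂ l (k + 1) z')
    (hr₁v : ∀ k, r₁ v₁ k = 0) (hr₂v : ∀ l, r₂ l v₂ = 0) {l k : ℕ} (hlk : l + k < v₁ + v₂)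
    (hpos : 0 < prOf P (fun w => 𝔲₁ w = l ∧ 𝔲₂ w = k)) (z' : Ω) :
    ∑ z, condLK P 𝔲₁ 𝔲₂ l k z * combinedKernel 𝔲₁ 𝔲₂ r₁ r₂ R₁ R₂ z z'
      = r₁ l k * condLK P 𝔲₁ 𝔲₂ (l + 1) k z' + r₂ l k * condLK P 𝔲₁ 𝔲₂ l (k + 1) z' := by
  obtain ⟨w, rfl, rfl⟩ := exists_of_prOf_ne_zero hpos.ne'
  have move₁ : r₁ (𝔲₁ w) (𝔲₂ w) * ∑ z, condLK P 𝔲₁ 𝔲₂ (𝔲₁ w) (𝔲₂ w) z * R₁ z z'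
      = r₁ (𝔲₁ w) (𝔲₂ w) * condLK P 𝔲₁ 𝔲₂ (𝔲₁ w + 1) (𝔲₂ w) z' := by
    rcases (h𝔲₁ w).lt_or_eq with h | h
    · rw [hker₁ _ _ hlk h hpos]
    · rw [h, hr₁v, zero_mul, zero_mul]
  have move₂ : r₂ (𝔲₁ w) (𝔲₂ w) * ∑ z, condLK P 𝔲₁ 𝔲₂ (𝔲₁ w) (𝔲₂ w) z * R₂ z z'
      = r₂ (𝔲₁ w) (𝔲₂ w) * condLK P 𝔲₁ 𝔲₂ (𝔲₁ w) (𝔲₂ w + 1) z' := by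
    rcases (h𝔲₂ w).lt_or_eq with h | h
    · rw [hker₂ _ _ hlk h hpos]
    · rw [h, hr₂v, zero_mul, zero_mul]
  rw [← move₁, ← move₂, mul_sum, mul_sum, ← sum_add_distrib]
  refine sum_congr rfl fun z _ => ?_
  rw [combinedKernel, condLK_mul_levels _ _ z fun a b => r₁ a b * R₁ z z' + r₂ a b * R₂ z z']
  ring

lemma pLU_mul_sum_condLK_mul_combinedKernel (hP : ∀ z, 0 ≤ P z)
    (h𝔲₁ : ∀ z, 𝔲₁ z ≤ v₁) (h𝔲₂ : ∀ z, 𝔲₂ z ≤ v₂)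
    (hker₁ : ∀ l k : ℕ, l + k < v₁ + v₂ → l < v₁ →
      0 < prOf P (fun w => 𝔲₁ w = l ∧ 𝔲₂ w = k) →
      ∀ z', (∑ z, condLK P 𝔲₁ 𝔲₂ l k z * R₁ z z') = condLK P 𝔲₁ 𝔲₂ (l + 1) k z')
    (hker₂ : ∀ l k : ℕ, l + k < v₁ + v₂ → k < v₂ →
      0 < prOf P (fun w => 𝔲₁ w = l ∧ 𝔲₂ w = k) →
      ∀ z', (∑ z, condLK P 𝔲₁ 𝔲₂ l k z * R₂ z z') = condLK P 𝔲₁ 𝔲₂ l (k + 1) z')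
    (hr₁v : ∀ k, r₁ v₁ k = 0) (hr₂v : ∀ l, r₂ l v₂ = 0) {m u : ℕ} (hu : u < v₁ + v₂)
    (hmu : m ≤ u) (z' : Ω) :
    pLU P 𝔲₁ 𝔲₂ m u * ∑ z, condLK P 𝔲₁ 𝔲₂ m (u - m) z * combinedKernel 𝔲₁ 𝔲₂ r₁ r₂ R₁ R₂ z z'
      = r₁ m (u - m) * pLU P 𝔲₁ 𝔲₂ m u * condLK P 𝔲₁ 𝔲₂ (m + 1) (u - m) z'
        + r₂ m (u - m) * pLU P 𝔲₁ 𝔲₂ m u * condLK P 𝔲₁ 𝔲₂ m (u - m + 1) z' := by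
  rw [pLU_eq_div hmu]
  rcases (prOf_nonneg hP (fun w => 𝔲₁ w = m ∧ 𝔲₂ w = u - m)).eq_or_lt with h | h
  · simp [← h]
  · rw [sum_condLK_mul_combinedKernel h𝔲₁ h𝔲₂ hker₁ hker₂ hr₁v hr₂v (by omega) h]
    ring

end

/-- `a m`, `b m` are the weights of the moves out of level `(m, u - m)` by `𝓡₁`, `𝓡₂`, and `q j` is
the weight that level `(j, u + 1 - j)` must collect. -/
lemma sum_range_levels_succ (u : ℕ) (a b q : ℕ → ℝ) (c : ℕ → ℕ → ℝ) (h₀ : q 0 = b 0)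
    (hlast : q (u + 1) = a u) (hmid : ∀ j, 0 < j → j ≤ u → q j = a (j - 1) + b j) :
    ∑ m ∈ range (u + 1), (a m * c (m + 1) (u - m) + b m * c m (u - m + 1))
      = ∑ j ∈ range (u + 2), q j * c j (u + 1 - j) := by
  conv_lhs => rw [sum_add_distrib, sum_range_succ, sum_range_succ']
  conv_rhs => rw [sum_range_succ', sum_range_succ]
  have hinner : ∀ m ∈ range u, q (m + 1) * c (m + 1) (u + 1 - (m + 1))
      = a m * c (m + 1) (u - m) + b (m + 1) * c (m + 1) (u - (m + 1) + 1) := by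
    intro m hm
    have := mem_range.mp hm
    rw [hmid (m + 1) m.succ_pos this, Nat.add_sub_cancel, Nat.add_sub_add_right,
      show u - (m + 1) + 1 = u - m by omega]
    ring
  rw [sum_congr rfl hinner, sum_add_distrib, h₀, hlast]
  simp only [Nat.sub_zero, Nat.sub_self]
  ring

theorem combined_transformation_general
    {Ω : Type*} [Fintype Ω]
    (P : Ω → ℝ) (hPnn : ∀ z, 0 ≤ P z)
    (v₁ v₂ : ℕ) (𝔲₁ 𝔲₂ : Ω → ℕ)
    (h𝔲₁ : ∀ z, 𝔲₁ z ≤ v₁) (h𝔲₂ : ∀ z, 𝔲₂ z ≤ v₂)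
    (R₁ R₂ : Ω → Ω → ℝ)
    (hker₁ : ∀ l k : ℕ, l + k < v₁ + v₂ → l < v₁ →
      0 < prOf P (fun w => 𝔲₁ w = l ∧ 𝔲₂ w = k) →
      ∀ z', (∑ z, condLK P 𝔲₁ 𝔲₂ l k z * R₁ z z') = condLK P 𝔲₁ 𝔲₂ (l + 1) k z')
    (hker₂ : ∀ l k : ℕ, l + k < v₁ + v₂ → k < v₂ →
      0 < prOf P (fun w => 𝔲₁ w = l ∧ 𝔲₂ w = k) →
      ∀ z', (∑ z, condLK P 𝔲₁ 𝔲₂ l k z * R₂ z z') = condLK P 𝔲₁ 𝔲₂ l (k + 1) z')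
    (r₁ r₂ : ℕ → ℕ → ℝ)
    (hr₁v : ∀ k, r₁ v₁ k = 0) (hr₂v : ∀ l, r₂ l v₂ = 0)
    (hmid : ∀ u : ℕ, u < v₁ + v₂ → ∀ l : ℕ, u - v₂ < l → l ≤ min u v₁ →
      r₁ (l - 1) (u - l + 1) * pLU P 𝔲₁ 𝔲₂ (l - 1) u
          + r₂ l (u - l) * pLU P 𝔲₁ 𝔲₂ l u
        = pLU P 𝔲₁ 𝔲₂ l (u + 1))
    (hlow : ∀ u : ℕ, u < v₁ + v₂ → u < v₂ →
      r₂ 0 u * pLU P 𝔲₁ 𝔲₂ 0 u = pLU P 𝔲₁ 𝔲₂ 0 (u + 1))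
    (hhigh : ∀ u : ℕ, u < v₁ + v₂ → u < v₁ →
      r₁ u 0 * pLU P 𝔲₁ 𝔲₂ u u = pLU P 𝔲₁ 𝔲₂ (u + 1) (u + 1)) :
    ∀ u : ℕ, u < v₁ + v₂ → 0 < prOf P (fun w => 𝔲₁ w + 𝔲₂ w = u) →
      ∀ z', (∑ z, condU P 𝔲₁ 𝔲₂ u z *
          (r₁ (𝔲₁ z) (𝔲₂ z) * R₁ z z' + r₂ (𝔲₁ z) (𝔲₂ z) * R₂ z z'))
        = condU P 𝔲₁ 𝔲₂ (u + 1) z' := by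
  intro u hu _ z'
  change ∑ z, condU P 𝔲₁ 𝔲₂ u z * combinedKernel 𝔲₁ 𝔲₂ r₁ r₂ R₁ R₂ z z' = _
  calc _ = ∑ m ∈ range (u + 1), pLU P 𝔲₁ 𝔲₂ m u *
          ∑ z, condLK P 𝔲₁ 𝔲₂ m (u - m) z * combinedKernel 𝔲₁ 𝔲₂ r₁ r₂ R₁ R₂ z z' := by
        simp_rw [condU_eq_sum hPnn u, sum_mul, mul_assoc, mul_sum]
        exact sum_comm
    _ = ∑ j ∈ range (u + 2), pLU P 𝔲₁ 𝔲₂ j (u + 1) * condLK P 𝔲₁ 𝔲₂ j (u + 1 - j) z' := by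
        rw [sum_congr rfl fun m hm => pLU_mul_sum_condLK_mul_combinedKernel hPnn h𝔲₁ h𝔲₂
          hker₁ hker₂ hr₁v hr₂v hu (Nat.lt_succ_iff.mp (mem_range.mp hm)) z']
        exact sum_range_levels_succ u (fun m => r₁ m (u - m) * pLU P 𝔲₁ 𝔲₂ m u)
          (fun m => r₂ m (u - m) * pLU P 𝔲₁ 𝔲₂ m u) _ (fun l k => condLK P 𝔲₁ 𝔲₂ l k z')
          (pLU_zero_succ h𝔲₂ hr₂v (hlow u hu))
          (by rw [Nat.sub_self]; exact pLU_succ_succ h𝔲₁ hr₁v (hhigh u hu))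
          (fun j hj₀ hju => pLU_succ_of_pos_of_le h𝔲₁ h𝔲₂ hr₁v hr₂v (hmid u hu) hj₀ hju)
    _ = condU P 𝔲₁ 𝔲₂ (u + 1) z' := (condU_eq_sum hPnn (u + 1) z').symm

/-- combined random transformations: let `Ω` be finite, `Z` a random
element of `Ω` with law `P`, `𝔲₁ ≤ v₁` and `𝔲₂ ≤ v₂`, `U = 𝔲₁(Z) + 𝔲₂(Z)`. Let
`𝓡₁, 𝓡₂` be Markov kernels with: whenever `Z ∼ P_{(l,k)}`, `l + k < v₁ + v₂`, if
`l < v₁` then `𝓡₁(Z) ∼ P_{(l+1,k)}` and if `k < v₂` then `𝓡₂(Z) ∼ P_{(l,k+1)}`. Let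
`r₁, r₂` satisfy `r₁ + r₂ = 1`, `r₁(v₁,·) = 0`, `r₂(·,v₂) = 0` and the recursions
`r₁(l-1,u-l+1) p(l-1|u) + r₂(l,u-l) p(l|u) = p(l|u+1)` for `(u-v₂) ∨ 0 < l ≤ u ∧ v₁`,
`r₂(0,u) p(0|u) = p(0|u+1)` when `u < v₂`, and `r₁(u,0) p(u|u) = p(u+1|u+1)` when
`u < v₁` (for all `u < v₁ + v₂`). Then the combined kernel `𝓡`, which at `z` applies
`𝓡ᵢ` with probability `rᵢ(𝔲₁ z, 𝔲₂ z)`, satisfies: for every `u < v₁ + v₂` with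
`P(U = u) > 0`, if `Z ∼ P_{(u)}` then `𝓡(Z) ∼ P_{(u+1)}`. -/
theorem combined_transformation
    {Ω : Type*} [Fintype Ω]
    (P : Ω → ℝ) (hPnn : ∀ z, 0 ≤ P z) (hP1 : ∑ z, P z = 1)
    (v₁ v₂ : ℕ) (𝔲₁ 𝔲₂ : Ω → ℕ)
    (h𝔲₁ : ∀ z, 𝔲₁ z ≤ v₁) (h𝔲₂ : ∀ z, 𝔲₂ z ≤ v₂)
    (R₁ R₂ : Ω → Ω → ℝ)
    (hR₁nn : ∀ z z', 0 ≤ R₁ z z') (hR₁1 : ∀ z, ∑ z', R₁ z z' = 1)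
    (hR₂nn : ∀ z z', 0 ≤ R₂ z z') (hR₂1 : ∀ z, ∑ z', R₂ z z' = 1)
    (hker₁ : ∀ l k : ℕ, l + k < v₁ + v₂ → l < v₁ →
      0 < prOf P (fun w => 𝔲₁ w = l ∧ 𝔲₂ w = k) →
      ∀ z', (∑ z, condLK P 𝔲₁ 𝔲₂ l k z * R₁ z z') = condLK P 𝔲₁ 𝔲₂ (l + 1) k z')
    (hker₂ : ∀ l k : ℕ, l + k < v₁ + v₂ → k < v₂ →
      0 < prOf P (fun w => 𝔲₁ w = l ∧ 𝔲₂ w = k) →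
      ∀ z', (∑ z, condLK P 𝔲₁ 𝔲₂ l k z * R₂ z z') = condLK P 𝔲₁ 𝔲₂ l (k + 1) z')
    (r₁ r₂ : ℕ → ℕ → ℝ)
    (hsum : ∀ l k, r₁ l k + r₂ l k = 1)
    (hr₁v : ∀ k, r₁ v₁ k = 0) (hr₂v : ∀ l, r₂ l v₂ = 0)
    (hmid : ∀ u : ℕ, u < v₁ + v₂ → ∀ l : ℕ, u - v₂ < l → l ≤ min u v₁ →
      r₁ (l - 1) (u - l + 1) * pLU P 𝔲₁ 𝔲₂ (l - 1) u
          + r₂ l (u - l) * pLU P 𝔲₁ 𝔲₂ l u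
        = pLU P 𝔲₁ 𝔲₂ l (u + 1))
    (hlow : ∀ u : ℕ, u < v₁ + v₂ → u < v₂ →
      r₂ 0 u * pLU P 𝔲₁ 𝔲₂ 0 u = pLU P 𝔲₁ 𝔲₂ 0 (u + 1))
    (hhigh : ∀ u : ℕ, u < v₁ + v₂ → u < v₁ →
      r₁ u 0 * pLU P 𝔲₁ 𝔲₂ u u = pLU P 𝔲₁ 𝔲₂ (u + 1) (u + 1)) :
    ∀ u : ℕ, u < v₁ + v₂ → 0 < prOf P (fun w => 𝔲₁ w + 𝔲₂ w = u) →
      ∀ z', (∑ z, condU P 𝔲₁ 𝔲₂ u z *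
          (r₁ (𝔲₁ z) (𝔲₂ z) * R₁ z z' + r₂ (𝔲₁ z) (𝔲₂ z) * R₂ z z'))
        = condU P 𝔲₁ 𝔲₂ (u + 1) z' :=
  combined_transformation_general P hPnn v₁ v₂ 𝔲₁ 𝔲₂ h𝔲₁ h𝔲₂ R₁ R₂ hker₁ hker₂ r₁ r₂ hr₁v hr₂v hmid
    hlow hhigh
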